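/- Let n ≥ 3 and let i be an integer with 1 ≤ i ≤ n−2. Then the number of permutations p of {1,…,n} such that the entry p_i is a leaf of the min1–min2 tree of p is exactly n!/3. -/

import Mathlib

/-- Binary trees with natural-number labels, used to model minmax trees of
permutations. -/
inductive BTree where
  | nil : BTree
  | node : ℕ → BTree → BTree → BTree
deriving DecidableEq, Repr

namespace BTree

/-- The label of the root (if any). -/
def rootVal : BTree → Option ℕ
  | .nil => none
  | .node v _ _ => some v

/-- Whether the value `x` occurs as a label in the tree. -/
def memB : BTree → ℕ → Bool
  | .nil, _ => false
  | .node v l r, x => (x == v) || memB l x || memB r x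

/-- The number of children of the (unique, for permutations) node labelled `x`. -/
def numChildren : BTree → ℕ → ℕ
  | .nil, _ => 0
  | .node v l r, x =>
      if x = v then (if l = .nil then 0 else 1) + (if r = .nil then 0 else 1)
      else numChildren l x + numChildren r x

/-- `x` is a leaf of the tree: it occurs in the tree and has no children. -/
def IsLeaf (t : BTree) (x : ℕ) : Prop := t.memB x = true ∧ t.numChildren x = 0

instance (t : BTree) (x : ℕ) : Decidable (t.IsLeaf x) := by unfold IsLeaf; infer_instance

/-- `childB t x y = true` iff `x` is a child of `y` in `t`, i.e. `x` is the root of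
the left or the right subtree hanging from `y`. -/
def childB : BTree → ℕ → ℕ → Bool
  | .nil, _, _ => false
  | .node v l r, x, y =>
      ((y == v) && (l.rootVal == some x || r.rootVal == some x))
      || childB l x y || childB r x y

/-- `ancB t x y = true` iff `x` is a (strict) ancestor of `y` in `t`, i.e. `y` lies
in a subtree hanging from `x`. -/
def ancB : BTree → ℕ → ℕ → Bool
  | .nil, _, _ => false
  | .node v l r, x, y =>
      ((x == v) && (memB l y || memB r y)) || ancB l x y || ancB r x y

end BTree

/-- `x` is the leftmost-eligible extreme letter of `l`: the minimum or the maximum. -/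
def isExtreme (l : List ℕ) (x : ℕ) : Bool :=
  (l.min? == some x) || (l.max? == some x)

/-- Fuelled construction of the minmax tree of a list of distinct naturals:
split the list as `u ++ [m] ++ v` where `m` is the leftmost of the minimum and
maximum letters, put `m` at the root and recurse on `u` (left) and `v` (right). -/
def mmAux : ℕ → List ℕ → BTree
  | 0, _ => .nil
  | fuel+1, l =>
    if l.isEmpty then .nil
    else
      let k := l.findIdx (isExtreme l)
      .node (l.getD k 0) (mmAux fuel (l.take k)) (mmAux fuel (l.drop (k+1)))

/-- The minmax tree `T^m_p` of a word `l` (with distinct letters). -/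
def minmaxTree (l : List ℕ) : BTree := mmAux l.length l

/-- The word `p_1 p_2 … p_n` on the letters `{1,…,n}` associated to a permutation
`p` of `Fin n`. -/
def permList (n : ℕ) (p : Equiv.Perm (Fin n)) : List ℕ :=
  List.ofFn (fun i => (p i : ℕ) + 1)

/-- The `i`-th entry `p_i` (1-indexed) of the permutation `p`. -/
def entryAt (n : ℕ) (p : Equiv.Perm (Fin n)) (i : ℕ) : ℕ :=
  (permList n p).getD (i - 1) 0

/-- `x` is the minimum or the second-minimum letter of `l` (for a one-letter word,
its unique letter qualifies). -/
def isMin12 (l : List ℕ) (x : ℕ) : Bool :=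
  (l.min? == some x) || ((l.erase (l.min?.getD 0)).min? == some x)

/-- Fuelled construction of the min1–min2 tree: split the list as `u ++ [m] ++ v`
where `m` is the leftmost of the minimum and second-minimum letters, put `m` at the
root and recurse on `u` (left) and `v` (right). -/
def mm12Aux : ℕ → List ℕ → BTree
  | 0, _ => .nil
  | fuel+1, l =>
    if l.isEmpty then .nil
    else
      let k := l.findIdx (isMin12 l)
      .node (l.getD k 0) (mm12Aux fuel (l.take k)) (mm12Aux fuel (l.drop (k+1)))

/-- The min1–min2 tree of a word `l` (with distinct letters). -/
def min12Tree (l : List ℕ) : BTree := mm12Aux l.length l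
/-!
Write `p = u a b c w` with `a = p_i`. Whether `a` is a leaf depends only on the suffix
`a b c w`: while the root of the subtree containing `a` lies in `u`, `a` passes to a right
subtree whose word is a shorter prefix followed by the same suffix; once no letter of the
prefix is min1 or min2, both lie in the suffix, and the tree splits as the suffix's own tree
would. On the suffix, if one of `a, b, c` is its min1 or min2, then `a` is a leaf iff `a` is
not but `b` is; otherwise the split lies inside `w`, and `w` may be cut down to its part before
the split. Since being min1/min2 of the suffix does not depend on the order of `a, b, c`, and
at most two of them qualify, exactly one of the rotations `a b c`, `b c a`, `c a b` has its
first letter a leaf. Rotating positions `i, i+1, i+2` permutes the permutations, so the leaf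
condition holds for exactly a third of them.
-/

theorem List.exists_append_cons_of_exists {α : Type*} {p : α → Bool} {l : List α}
    (h : ∃ y ∈ l, p y = true) :
    ∃ u m v, l = u ++ m :: v ∧ p m = true ∧ ∀ y ∈ u, p y = false := by
  obtain ⟨b, hb⟩ := Option.isSome_iff_exists.mp (find?_isSome.mpr h)
  obtain ⟨hbm, u, v, rfl, hu⟩ := find?_eq_some_iff_append.mp hb
  exact ⟨u, b, v, rfl, hbm, fun y hy => by simpa using hu y hy⟩

theorem three_mul_card_filter_eq_card {α : Type*} [Fintype α] (σ : α ≃ α) (P : α → Prop)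
    [DecidablePred P]
    (h : ∀ x, (if P x then 1 else 0) + (if P (σ x) then 1 else 0) +
      (if P (σ (σ x)) then 1 else 0) = 1) :
    3 * (Finset.univ.filter P).card = Fintype.card α := by
  set f : α → ℕ := fun x => if P x then 1 else 0
  have h₁ : ∑ x, f (σ x) = ∑ x, f x := Equiv.sum_comp σ f
  have h₂ : ∑ x, f (σ (σ x)) = ∑ x, f x := (Equiv.sum_comp σ (f ∘ σ)).trans h₁
  calc 3 * (Finset.univ.filter P).card = ∑ x, (f x + f (σ x) + f (σ (σ x))) := by
        rw [Finset.sum_add_distrib, Finset.sum_add_distrib, h₁, h₂, Finset.card_filter]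
        ring
    _ = Fintype.card α := by simp [f, h]

namespace BTree

theorem numChildren_eq_zero_of_memB_eq_false {t : BTree} {x : ℕ} (h : t.memB x = false) :
    t.numChildren x = 0 := by
  induction t with
  | nil => rfl
  | node v l r ihl ihr =>
    simp only [memB, Bool.or_eq_false_iff, beq_eq_false_iff_ne] at h
    simp [numChildren, h.1.1, ihl h.1.2, ihr h.2]

theorem isLeaf_node_iff_left {v x : ℕ} {l r : BTree} (hxv : x ≠ v) (hr : r.memB x = false) :
    (node v l r).IsLeaf x ↔ l.IsLeaf x := by
  simp [IsLeaf, memB, numChildren, hxv, hr, numChildren_eq_zero_of_memB_eq_false hr]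

theorem isLeaf_node_iff_right {v x : ℕ} {l r : BTree} (hxv : x ≠ v) (hl : l.memB x = false) :
    (node v l r).IsLeaf x ↔ r.IsLeaf x := by
  simp [IsLeaf, memB, numChildren, hxv, hl, numChildren_eq_zero_of_memB_eq_false hl]

theorem isLeaf_node_self {v : ℕ} {l r : BTree} : (node v l r).IsLeaf v ↔ l = nil ∧ r = nil := by
  cases l <;> cases r <;> simp [IsLeaf, memB, numChildren]

end BTree

namespace Min12Tree

open List BTree

theorem mem_of_isMin12 {l : List ℕ} {x : ℕ} (h : isMin12 l x = true) : x ∈ l := by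
  simp only [isMin12, Bool.or_eq_true, beq_iff_eq, min?_eq_some_iff] at h
  exact h.elim (·.1) (fun h => mem_of_mem_erase h.1)

theorem isMin12_iff {l : List ℕ} {x : ℕ} (hl : l.Nodup) (hx : x ∈ l) :
    isMin12 l x = true ↔ ∀ y ∈ l, ∀ z ∈ l, y < x → z < x → y = z := by
  obtain ⟨m, hm⟩ := Option.isSome_iff_exists.mp (isSome_min?_of_mem hx)
  obtain ⟨hml, hmin⟩ := min?_eq_some_iff.mp hm
  suffices (m = x ∨ (x ≠ m ∧ x ∈ l) ∧ ∀ b, b ≠ m ∧ b ∈ l → x ≤ b) ↔ ∀ y ∈ l, y < x → y = m by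
    simp only [isMin12, hm, Option.getD_some, Bool.or_eq_true, beq_iff_eq, Option.some.injEq,
      min?_eq_some_iff, hl.mem_erase_iff, this]
    exact ⟨fun h y hy z hz hyx hzx => (h y hy hyx).trans (h z hz hzx).symm,
      fun h y hy hyx => h y hy m hml hyx (by have := hmin y hy; omega)⟩
  constructor
  · rintro (rfl | ⟨-, h⟩) y hy hyx
    · exact absurd (hmin y hy) (by omega)
    · by_contra hne
      exact absurd (h y ⟨hne, hy⟩) (by omega)
  · intro h
    refine or_iff_not_imp_left.mpr fun hxm => ⟨⟨Ne.symm hxm, hx⟩, fun b ⟨hb, hbl⟩ => ?_⟩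
    by_contra hbx
    exact hb (h b hbl (by omega))

theorem isMin12_eq_false_iff {l : List ℕ} {x : ℕ} (hl : l.Nodup) (hx : x ∈ l) :
    isMin12 l x = false ↔ ∃ y ∈ l, ∃ z ∈ l, y ≠ z ∧ y < x ∧ z < x := by
  rw [← Bool.not_eq_true, isMin12_iff hl hx]
  grind

theorem isMin12_eq_of_perm {l l' : List ℕ} (h : l.Perm l') (hl : l.Nodup) :
    isMin12 l = isMin12 l' := by
  funext x
  by_cases hx : x ∈ l
  · rw [Bool.eq_iff_iff, isMin12_iff hl hx, isMin12_iff (hl.perm h) (h.mem_iff.mp hx)]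
    simp only [h.mem_iff]
  · have hx' : x ∉ l' := fun hx' => hx (h.mem_iff.mpr hx')
    rw [Bool.eq_false_iff.mpr (mt mem_of_isMin12 hx), Bool.eq_false_iff.mpr (mt mem_of_isMin12 hx')]

theorem isMin12_eq_false_of_lt_of_lt {l : List ℕ} {x y z : ℕ} (hl : l.Nodup) (hx : x ∈ l)
    (hy : y ∈ l) (hz : z ∈ l) (hxy : x ≠ y) (hxz : x < z) (hyz : y < z) :
    isMin12 l z = false :=
  (isMin12_eq_false_iff hl hz).mpr ⟨x, hx, y, hy, hxy, hxz, hyz⟩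

theorem isMin12_eq_false_of_three {l : List ℕ} {a b c : ℕ} (hl : l.Nodup) (ha : a ∈ l)
    (hb : b ∈ l) (hc : c ∈ l) (hab : a ≠ b) (hac : a ≠ c) (hbc : b ≠ c) :
    isMin12 l a = false ∨ isMin12 l b = false ∨ isMin12 l c = false := by
  rcases Nat.lt_or_gt_of_ne hab with h₁ | h₁ <;> rcases Nat.lt_or_gt_of_ne hac with h₂ | h₂
  · rcases Nat.lt_or_gt_of_ne hbc with h₃ | h₃
    · exact .inr (.inr (isMin12_eq_false_of_lt_of_lt hl ha hb hc hab h₂ h₃))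
    · exact .inr (.inl (isMin12_eq_false_of_lt_of_lt hl ha hc hb hac h₁ h₃))
  · exact .inr (.inl (isMin12_eq_false_of_lt_of_lt hl ha hc hb hac h₁ (h₂.trans h₁)))
  · exact .inr (.inr (isMin12_eq_false_of_lt_of_lt hl ha hb hc hab h₂ (h₁.trans h₂)))
  · exact .inl (isMin12_eq_false_of_lt_of_lt hl hb hc ha hbc h₁ h₂)

theorem exists_append_cons_isMin12 {l : List ℕ} (hl : l ≠ []) :
    ∃ u m v, l = u ++ m :: v ∧ isMin12 l m = true ∧ ∀ y ∈ u, isMin12 l y = false := by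
  obtain ⟨m, hm⟩ := Option.ne_none_iff_exists'.mp (mt min?_eq_none_iff.mp hl)
  exact exists_append_cons_of_exists ⟨m, (min?_eq_some_iff.mp hm).1, by simp [isMin12, hm]⟩

theorem exists_two_lt_of_forall_isMin12_eq_false {u w : List ℕ} (hnd : (u ++ w).Nodup)
    (hu : ∀ y ∈ u, isMin12 (u ++ w) y = false) {z : ℕ} (hz : z ∈ u) :
    ∃ s ∈ w, ∃ t ∈ w, s ≠ t ∧ s < z ∧ t < z := by
  -- the two letters below the least letter `m` of `u` witness that `m` is not min1/min2
  obtain ⟨m, hm⟩ := Option.isSome_iff_exists.mp (isSome_min?_of_mem hz)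
  obtain ⟨hmu, hmin⟩ := min?_eq_some_iff.mp hm
  obtain ⟨s, hs, t, ht, hst, hsm, htm⟩ :=
    (isMin12_eq_false_iff hnd (mem_append_left w hmu)).mp (hu m hmu)
  have hw : ∀ y ∈ u ++ w, y < m → y ∈ w := fun y hy hym =>
    (mem_append.mp hy).resolve_left fun hyu => absurd (hmin y hyu) (by omega)
  have hmz := hmin z hz
  exact ⟨s, hw s hs hsm, t, hw t ht htm, hst, by omega, by omega⟩

theorem isMin12_append_of_forall_isMin12_eq_false {u w : List ℕ} (hnd : (u ++ w).Nodup)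
    (hu : ∀ y ∈ u, isMin12 (u ++ w) y = false) {y : ℕ} (hy : y ∈ w) :
    isMin12 (u ++ w) y = isMin12 w y := by
  rw [Bool.eq_iff_iff, isMin12_iff hnd (mem_append_right u hy),
    isMin12_iff (hnd.sublist (sublist_append_right u w)) hy]
  refine ⟨fun h s hs t ht => h s (mem_append_right u hs) t (mem_append_right u ht),
    fun h s hs t ht hsy hty => ?_⟩
  have hw : ∀ r ∈ u ++ w, r < y → r ∈ w := fun r hr hry =>
    (mem_append.mp hr).resolve_left fun hru => by
      obtain ⟨a, ha, b, hb, hab, har, hbr⟩ := exists_two_lt_of_forall_isMin12_eq_false hnd hu hru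
      exact hab (h a ha b hb (by omega) (by omega))
  exact h s (hw s hs hsy) t (hw t ht hty) hsy hty

theorem mm12Aux_append_cons (f : ℕ) {u v : List ℕ} {m : ℕ}
    (hm : isMin12 (u ++ m :: v) m = true) (hu : ∀ y ∈ u, isMin12 (u ++ m :: v) y = false) :
    mm12Aux (f + 1) (u ++ m :: v) = .node m (mm12Aux f u) (mm12Aux f v) := by
  have hk : (u ++ m :: v).findIdx (isMin12 (u ++ m :: v)) = u.length := by
    simp [findIdx_append, findIdx_eq_length_of_false hu, findIdx_cons, hm]
  simp [mm12Aux, hk]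

theorem mm12Aux_eq_of_length_le {f g : ℕ} {l : List ℕ} (hf : l.length ≤ f)
    (hg : l.length ≤ g) : mm12Aux f l = mm12Aux g l := by
  induction f generalizing g l with
  | zero =>
    obtain rfl : l = [] := length_eq_zero_iff.mp (by omega)
    cases g <;> rfl
  | succ f ih =>
    rcases eq_or_ne l [] with rfl | hl
    · cases g <;> rfl
    obtain ⟨u, m, v, rfl, hm, hu⟩ := exists_append_cons_isMin12 hl
    obtain ⟨g, rfl⟩ : ∃ g', g = g' + 1 := ⟨g - 1, by simp at hg; omega⟩
    simp only [length_append, length_cons] at hf hg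
    rw [mm12Aux_append_cons f hm hu, mm12Aux_append_cons g hm hu,
      ih (l := u) (g := g) (by omega) (by omega), ih (l := v) (g := g) (by omega) (by omega)]

theorem min12Tree_append_cons {u v : List ℕ} {m : ℕ} (hm : isMin12 (u ++ m :: v) m = true)
    (hu : ∀ y ∈ u, isMin12 (u ++ m :: v) y = false) :
    min12Tree (u ++ m :: v) = .node m (min12Tree u) (min12Tree v) := by
  rw [min12Tree, show (u ++ m :: v).length = (u.length + v.length) + 1 by simp; omega,
    mm12Aux_append_cons _ hm hu, min12Tree, min12Tree,
    mm12Aux_eq_of_length_le (l := u) (g := u.length) (by omega) le_rfl,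
    mm12Aux_eq_of_length_le (l := v) (g := v.length) (by omega) le_rfl]

theorem min12Tree_append_of_forall_isMin12_eq_false {u w₁ w₂ : List ℕ} {m : ℕ}
    (hnd : (u ++ (w₁ ++ m :: w₂)).Nodup)
    (hu : ∀ y ∈ u, isMin12 (u ++ (w₁ ++ m :: w₂)) y = false)
    (hm : isMin12 (w₁ ++ m :: w₂) m = true) (hw₁ : ∀ y ∈ w₁, isMin12 (w₁ ++ m :: w₂) y = false) :
    min12Tree (u ++ (w₁ ++ m :: w₂)) = .node m (min12Tree (u ++ w₁)) (min12Tree w₂) := by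
  have hagree := fun y (hy : y ∈ w₁ ++ m :: w₂) =>
    isMin12_append_of_forall_isMin12_eq_false hnd hu hy
  rw [← append_assoc]
  apply min12Tree_append_cons
  · rw [append_assoc, hagree m (by simp), hm]
  · intro y hy
    rw [append_assoc]
    rcases mem_append.mp hy with hyu | hyw₁
    · exact hu y hyu
    · rw [hagree y (by simp [hyw₁]), hw₁ y hyw₁]

theorem memB_min12Tree (l : List ℕ) (x : ℕ) : (min12Tree l).memB x = true ↔ x ∈ l := by
  rcases eq_or_ne l [] with rfl | hl
  · simp [min12Tree, mm12Aux, memB]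
  obtain ⟨u, m, v, rfl, hm, hu⟩ := exists_append_cons_isMin12 hl
  rw [min12Tree_append_cons hm hu]
  simp [memB, memB_min12Tree u x, memB_min12Tree v x]
  tauto
termination_by l.length

theorem memB_min12Tree_eq_false {l : List ℕ} {x : ℕ} (h : x ∉ l) :
    (min12Tree l).memB x = false :=
  Bool.eq_false_iff.mpr (mt (memB_min12Tree l x).mp h)

theorem min12Tree_eq_nil_iff {l : List ℕ} : min12Tree l = .nil ↔ l = [] := by
  refine ⟨fun h => ?_, fun h => by simp [h, min12Tree, mm12Aux]⟩
  by_contra hl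
  obtain ⟨u, m, v, rfl, hm, hu⟩ := exists_append_cons_isMin12 hl
  simp [min12Tree_append_cons hm hu] at h

def HeadIsLeaf (l : List ℕ) : Prop := (min12Tree l).IsLeaf l.headI

instance : DecidablePred HeadIsLeaf := fun l =>
  inferInstanceAs (Decidable ((min12Tree l).IsLeaf l.headI))

theorem headIsLeaf_cons_iff_of_isMin12 {x : ℕ} {w : List ℕ} (hx : isMin12 (x :: w) x = true) :
    HeadIsLeaf (x :: w) ↔ w = [] := by
  have := min12Tree_append_cons (u := []) hx (by simp)
  rw [nil_append] at this
  rw [HeadIsLeaf, headI_cons, this, isLeaf_node_self, min12Tree_eq_nil_iff, min12Tree_eq_nil_iff]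
  simp

theorem headIsLeaf_cons_append_cons_iff {x m : ℕ} {u v : List ℕ}
    (hnd : (x :: u ++ m :: v).Nodup) (hm : isMin12 (x :: u ++ m :: v) m = true)
    (hu : ∀ y ∈ x :: u, isMin12 (x :: u ++ m :: v) y = false) :
    HeadIsLeaf (x :: u ++ m :: v) ↔ HeadIsLeaf (x :: u) := by
  have hxm : x ≠ m := fun h => by subst h; simp [nodup_append] at hnd
  have hxv : x ∉ v := fun h => (nodup_cons.mp hnd).1 (by simp [h])
  have := min12Tree_append_cons (u := x :: u) hm hu
  simp only [HeadIsLeaf, headI_cons, cons_append] at this ⊢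
  rw [this, isLeaf_node_iff_left hxm (memB_min12Tree_eq_false hxv)]

theorem isLeaf_min12Tree_append_iff {u w : List ℕ} {x : ℕ} (hnd : (u ++ x :: w).Nodup) :
    (min12Tree (u ++ x :: w)).IsLeaf x ↔ HeadIsLeaf (x :: w) := by
  rcases eq_or_ne u [] with rfl | hu0
  · rfl
  by_cases hpiv : ∃ y ∈ u, isMin12 (u ++ x :: w) y = true
  · obtain ⟨u₁, m, u₂, rfl, hm, hu₁⟩ := exists_append_cons_of_exists hpiv
    simp only [append_assoc, cons_append] at hnd hm hu₁ ⊢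
    have hxm : x ≠ m := fun h => by subst h; simp [nodup_append] at hnd
    have hxu₁ : x ∉ u₁ := fun h => disjoint_of_nodup_append hnd h (by simp)
    rw [min12Tree_append_cons hm hu₁,
      isLeaf_node_iff_right hxm (memB_min12Tree_eq_false hxu₁)]
    exact isLeaf_min12Tree_append_iff (hnd.sublist (sublist_append_right _ _)).of_cons
  replace hpiv : ∀ y ∈ u, isMin12 (u ++ x :: w) y = false := by simpa using hpiv
  obtain ⟨w₁, m, w₂, hsplit, hm, hw₁⟩ := exists_append_cons_isMin12 (cons_ne_nil x w)
  have htree : min12Tree (u ++ x :: w) = .node m (min12Tree (u ++ w₁)) (min12Tree w₂) := by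
    rw [hsplit] at hnd hpiv hm hw₁ ⊢
    exact min12Tree_append_of_forall_isMin12_eq_false hnd hpiv hm hw₁
  rcases w₁ with _ | ⟨x', a⟩
  · -- both sides fail: `x` is the root, with the nonempty `u` to its left here and the
    -- nonempty `w` to its right in the tree of `x :: w`
    obtain ⟨rfl, rfl⟩ : x = m ∧ w = w₂ := by simpa using hsplit
    have hw : w ≠ [] := by
      rintro rfl
      obtain ⟨z, hz⟩ := exists_mem_of_ne_nil u hu0
      obtain ⟨s, hs, t, ht, hst, -, -⟩ := exists_two_lt_of_forall_isMin12_eq_false hnd hpiv hz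
      simp only [mem_singleton] at hs ht
      exact hst (hs.trans ht.symm)
    rw [htree, isLeaf_node_self, headIsLeaf_cons_iff_of_isMin12 hm, min12Tree_eq_nil_iff,
      min12Tree_eq_nil_iff, append_nil]
    simp [hu0, hw]
  · obtain ⟨rfl, rfl⟩ : x = x' ∧ w = a ++ m :: w₂ := by simpa using hsplit
    have hnd' : (x :: a ++ m :: w₂).Nodup := hnd.sublist (sublist_append_right _ _)
    have hxm : x ≠ m := fun h => by subst h; simp [nodup_append] at hnd'
    have hxw₂ : x ∉ w₂ := fun h => (nodup_cons.mp hnd').1 (by simp [h])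
    rw [htree, isLeaf_node_iff_left hxm (memB_min12Tree_eq_false hxw₂),
      isLeaf_min12Tree_append_iff (hnd.sublist (by simp))]
    exact (headIsLeaf_cons_append_cons_iff hnd' hm hw₁).symm
termination_by u.length + w.length

theorem headIsLeaf_iff_of_isMin12 {a b c : ℕ} {w : List ℕ} (hnd : (a :: b :: c :: w).Nodup)
    (h : isMin12 (a :: b :: c :: w) a = true ∨ isMin12 (a :: b :: c :: w) b = true ∨
      isMin12 (a :: b :: c :: w) c = true) :
    HeadIsLeaf (a :: b :: c :: w) ↔
      isMin12 (a :: b :: c :: w) a = false ∧ isMin12 (a :: b :: c :: w) b = true := by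
  cases ha : isMin12 (a :: b :: c :: w) a
  · cases hb : isMin12 (a :: b :: c :: w) b
    · have hc : isMin12 (a :: b :: c :: w) c = true := by simpa [ha, hb] using h
      have hab : isMin12 [a, b] a = true :=
        (isMin12_iff (hnd.sublist (by simp)) (by simp)).mpr (by simp)
      refine (headIsLeaf_cons_append_cons_iff (u := [b]) hnd hc (by simp [ha, hb])).trans ?_
      simp [headIsLeaf_cons_iff_of_isMin12 hab]
    · refine (headIsLeaf_cons_append_cons_iff (u := []) hnd hb (by simp [ha])).trans ?_
      simp [headIsLeaf_cons_iff_of_isMin12 (x := a) (w := []) (by simp [isMin12])]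
  · rw [headIsLeaf_cons_iff_of_isMin12 ha]
    simp

theorem headIsLeaf_rotations_exactly_one (w : List ℕ) {a b c : ℕ} (hnd : (a :: b :: c :: w).Nodup) :
    (if HeadIsLeaf (a :: b :: c :: w) then 1 else 0) +
      (if HeadIsLeaf (b :: c :: a :: w) then 1 else 0) +
      (if HeadIsLeaf (c :: a :: b :: w) then 1 else 0) = 1 := by
  have hperm₂ : (a :: b :: c :: w).Perm (b :: c :: a :: w) :=
    (Perm.swap b a _).trans (.cons b (.swap c a _))
  have hperm₃ : (a :: b :: c :: w).Perm (c :: a :: b :: w) :=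
    (Perm.cons a (.swap c b _)).trans (.swap c a _)
  have hnd₂ := hnd.perm hperm₂
  have hnd₃ := hnd.perm hperm₃
  have hP₂ := (isMin12_eq_of_perm hperm₂ hnd).symm
  have hP₃ := (isMin12_eq_of_perm hperm₃ hnd).symm
  by_cases h : isMin12 (a :: b :: c :: w) a = true ∨ isMin12 (a :: b :: c :: w) b = true ∨
      isMin12 (a :: b :: c :: w) c = true
  · have hfew : isMin12 (a :: b :: c :: w) a = false ∨ isMin12 (a :: b :: c :: w) b = false ∨
        isMin12 (a :: b :: c :: w) c = false := by
      have hdist := hnd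
      simp only [nodup_cons, mem_cons, not_or] at hdist
      exact isMin12_eq_false_of_three hnd (by simp) (by simp) (by simp)
        hdist.1.1 hdist.1.2.1 hdist.2.1.1
    simp only [headIsLeaf_iff_of_isMin12 hnd h, headIsLeaf_iff_of_isMin12 hnd₂ (by rw [hP₂]; tauto),
      headIsLeaf_iff_of_isMin12 hnd₃ (by rw [hP₃]; tauto), hP₂, hP₃]
    revert h hfew
    cases isMin12 (a :: b :: c :: w) a <;> cases isMin12 (a :: b :: c :: w) b <;>
      cases isMin12 (a :: b :: c :: w) c <;> simp
  simp only [not_or, Bool.not_eq_true] at h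
  obtain ⟨ha, hb, hc⟩ := h
  obtain ⟨w₁, m, w₂, rfl, hm, hw₁⟩ : ∃ w₁ m w₂, w = w₁ ++ m :: w₂ ∧
      isMin12 (a :: b :: c :: w) m = true ∧ ∀ y ∈ w₁, isMin12 (a :: b :: c :: w) y = false := by
    obtain ⟨u, m, v, hsplit, hm, -⟩ := exists_append_cons_isMin12 (cons_ne_nil a (b :: c :: w))
    refine exists_append_cons_of_exists ⟨m, ?_, hm⟩
    have : m ∈ a :: b :: c :: w := hsplit ▸ by simp
    simp only [mem_cons] at this
    rcases this with rfl | rfl | rfl | hmw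
    exacts [absurd hm (by simp [ha]), absurd hm (by simp [hb]), absurd hm (by simp [hc]), hmw]
  have e₁ : HeadIsLeaf (a :: b :: c :: (w₁ ++ m :: w₂)) ↔ HeadIsLeaf (a :: b :: c :: w₁) :=
    headIsLeaf_cons_append_cons_iff (u := b :: c :: w₁) (v := w₂) hnd hm
      (by simpa [ha, hb, hc] using hw₁)
  have e₂ : HeadIsLeaf (b :: c :: a :: (w₁ ++ m :: w₂)) ↔ HeadIsLeaf (b :: c :: a :: w₁) :=
    headIsLeaf_cons_append_cons_iff (u := c :: a :: w₁) (v := w₂) hnd₂ (by simpa [hP₂] using hm)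
      (by simpa [hP₂, ha, hb, hc] using hw₁)
  have e₃ : HeadIsLeaf (c :: a :: b :: (w₁ ++ m :: w₂)) ↔ HeadIsLeaf (c :: a :: b :: w₁) :=
    headIsLeaf_cons_append_cons_iff (u := a :: b :: w₁) (v := w₂) hnd₃ (by simpa [hP₃] using hm)
      (by simpa [hP₃, ha, hb, hc] using hw₁)
  simp only [e₁, e₂, e₃]
  exact headIsLeaf_rotations_exactly_one w₁ (hnd.sublist (by simp))
termination_by w.length

theorem nodup_permList (n : ℕ) (p : Equiv.Perm (Fin n)) : (permList n p).Nodup :=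
  nodup_ofFn.mpr fun i j h => p.injective (Fin.ext (by simpa using h))

theorem permList_drop_eq_cons {n k : ℕ} (p : Equiv.Perm (Fin n)) (hk : k < n) :
    (permList n p).drop k = ((p ⟨k, hk⟩ : ℕ) + 1) :: (permList n p).drop (k + 1) := by
  rw [drop_eq_getElem_cons (by simpa [permList] using hk)]
  simp [permList]

theorem permList_mul_drop {n k : ℕ} (p τ : Equiv.Perm (Fin n))
    (hτ : ∀ j : Fin n, k ≤ (j : ℕ) → τ j = j) :
    (permList n (p * τ)).drop k = (permList n p).drop k := by
  refine ext_getElem (by simp [permList]) fun j h₁ h₂ => ?_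
  simp [permList, hτ ⟨k + j, _⟩ (by simp)]

theorem permList_drop_eq_cons₃ {n k : ℕ} (p : Equiv.Perm (Fin n)) (hk : k + 2 < n) :
    (permList n p).drop k = ((p ⟨k, by omega⟩ : ℕ) + 1) :: ((p ⟨k + 1, by omega⟩ : ℕ) + 1) ::
      ((p ⟨k + 2, hk⟩ : ℕ) + 1) :: (permList n p).drop (k + 3) := by
  rw [permList_drop_eq_cons p (k := k), permList_drop_eq_cons p (k := k + 1),
    permList_drop_eq_cons p (k := k + 2)]

theorem isLeaf_entryAt_iff {n k : ℕ} (p : Equiv.Perm (Fin n)) (hk : k + 2 < n) :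
    (min12Tree (permList n p)).IsLeaf (entryAt n p (k + 1)) ↔
      HeadIsLeaf (((p ⟨k, by omega⟩ : ℕ) + 1) :: ((p ⟨k + 1, by omega⟩ : ℕ) + 1) ::
        ((p ⟨k + 2, hk⟩ : ℕ) + 1) :: (permList n p).drop (k + 3)) := by
  have hsplit := take_append_drop k (permList n p)
  rw [permList_drop_eq_cons₃ p hk] at hsplit
  have hnd := nodup_permList n p
  rw [← hsplit] at hnd
  have hentry : entryAt n p (k + 1) = (p ⟨k, by omega⟩ : ℕ) + 1 := by
    simp [entryAt, permList, getD_eq_getElem?_getD, show k < n by omega]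
  rw [hentry, ← isLeaf_min12Tree_append_iff hnd, hsplit]

theorem exists_perm_rotate_three {n k : ℕ} (hk : k + 2 < n) :
    ∃ σ : Equiv.Perm (Fin n), σ ⟨k, by omega⟩ = ⟨k + 1, by omega⟩ ∧
      σ ⟨k + 1, by omega⟩ = ⟨k + 2, hk⟩ ∧ σ ⟨k + 2, hk⟩ = ⟨k, by omega⟩ ∧
      ∀ j : Fin n, k + 3 ≤ (j : ℕ) → σ j = j := by
  refine ⟨Equiv.swap ⟨k, by omega⟩ ⟨k + 1, by omega⟩ * Equiv.swap ⟨k + 1, by omega⟩ ⟨k + 2, hk⟩,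
    ?_, ?_, ?_, fun j hj => ?_⟩
  · simp [Equiv.swap_apply_def]
  · simp [Equiv.swap_apply_def]
  · simp
  · have hne : ∀ i (hi : i < n), i ≤ k + 2 → j ≠ ⟨i, hi⟩ := fun i hi hik h => by
      simp [h] at hj; omega
    rw [Equiv.Perm.mul_apply, Equiv.swap_apply_of_ne_of_ne (hne _ _ (by omega)) (hne _ _ le_rfl),
      Equiv.swap_apply_of_ne_of_ne (hne _ _ (by omega)) (hne _ _ (by omega))]

end Min12Tree

open Min12Tree

theorem min12_entry_leaf_count_general (n : ℕ) (i : ℕ) (hi1 : 1 ≤ i)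
    (hi2 : i ≤ n - 2) :
    (Finset.univ.filter (fun p : Equiv.Perm (Fin n) =>
        (min12Tree (permList n p)).IsLeaf (entryAt n p i))).card = n.factorial / 3 := by
  obtain ⟨k, rfl⟩ : ∃ k, i = k + 1 := ⟨i - 1, by omega⟩
  have hk : k + 2 < n := by omega
  obtain ⟨σ, hσ₀, hσ₁, hσ₂, hσ⟩ := exists_perm_rotate_three hk
  have hcount := three_mul_card_filter_eq_card (Equiv.mulRight σ)
    (fun p : Equiv.Perm (Fin n) => (min12Tree (permList n p)).IsLeaf (entryAt n p (k + 1)))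
    fun p => by
      simp only [Equiv.coe_mulRight, isLeaf_entryAt_iff _ hk, Equiv.Perm.mul_apply, hσ₀, hσ₁, hσ₂,
        permList_mul_drop _ _ hσ]
      exact headIsLeaf_rotations_exactly_one _
        (permList_drop_eq_cons₃ p hk ▸ (nodup_permList n p).sublist (List.drop_sublist k _))
  rw [Fintype.card_perm, Fintype.card_fin] at hcount
  omega

/-- For `n ≥ 3` and `1 ≤ i ≤ n − 2`, the number of permutations `p`
of `{1,…,n}` such that the entry `p_i` is a leaf of the min1–min2 tree of `p` is
exactly `n!/3`. -/
theorem min12_entry_leaf_count (n : ℕ) (hn : 3 ≤ n) (i : ℕ) (hi1 : 1 ≤ i)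
    (hi2 : i ≤ n - 2) :
    (Finset.univ.filter (fun p : Equiv.Perm (Fin n) =>
        (min12Tree (permList n p)).IsLeaf (entryAt n p i))).card = n.factorial / 3 :=
  min12_entry_leaf_count_general n i hi1 hi2
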